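/- Let S₁, S₂ ⊆ ℕ be finite nonempty disjoint sets. Then z_{S₁ ∪ S₂} ≤ z_{S₁} + z_{S₂} + (1/(2π))·∫₀¹ |g_{S₂}(t)·(deriv g_{S₁} t) − g_{S₁}(t)·(deriv g_{S₂} t)| / (√(g_{S₁}(t)·g_{S₂}(t))·(g_{S₁}(t) + g_{S₂}(t))) dt. -/

import Mathlib

open Real Finset

/-- `g_S(t) = ∑_{e ∈ S} t^(2e)`. -/
noncomputable def gS (S : Finset ℕ) (t : ℝ) : ℝ := ∑ e ∈ S, t ^ (2 * e)

/-- `h_S(t) = ∑_{e ∈ S} e² t^(2e-2)` (the term for `e = 0` being `0`). -/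
noncomputable def hS (S : Finset ℕ) (t : ℝ) : ℝ := ∑ e ∈ S, (e : ℝ) ^ 2 * t ^ (2 * e - 2)

/-- `q_S(t) = ∑_{e ∈ S} e t^(2e-1)` (the term for `e = 0` being `0`). -/
noncomputable def qS (S : Finset ℕ) (t : ℝ) : ℝ := ∑ e ∈ S, (e : ℝ) * t ^ (2 * e - 1)

/-- `E_S(t) = g_S(t) h_S(t) - q_S(t)²`. -/
noncomputable def ES (S : Finset ℕ) (t : ℝ) : ℝ := gS S t * hS S t - qS S t ^ 2

/-- The expected number of real zeros in `(0,1)`, given by the Edelman–Kostlan integral. -/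
noncomputable def zS (S : Finset ℕ) : ℝ :=
  (1 / Real.pi) * ∫ t in (0 : ℝ)..1, Real.sqrt (ES S t) / gS S t

/-!
Write `a = g_{S₁}`, `b = g_{S₂}` and `δ = q_{S₁} g_{S₂} - q_{S₂} g_{S₁}`. As `g`, `h`, `q` are additive
over disjoint unions, `a b E_{S₁ ∪ S₂} = δ² + b (a + b) E_{S₁} + a (a + b) E_{S₂}`, and `E_S ≥ 0` by
Lagrange's identity. Taking square roots term by term bounds the Edelman–Kostlan density of
`S₁ ∪ S₂` by those of `S₁`, `S₂` plus `|δ| / (√(ab) (a + b))`, which is half the correction integrand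
because `g_S' = 2 q_S`. To integrate, all densities must be integrable: Lagrange's identity gives
`t² E_S(t) = ½ ∑ (e - f)² t^(2e + 2f) = O(t^(4 min S + 2))`, while `g_S(t) ≥ t^(2 min S)`, so
`√E_S / g_S` is bounded on `(0, 1]`.
-/

open MeasureTheory

section Lagrange

variable {ι R : Type*} [CommRing R]

theorem two_mul_sum_mul_sum_sub_sq_sum (s : Finset ι) (a x : ι → R) :
    2 * ((∑ i ∈ s, x i) * (∑ i ∈ s, a i ^ 2 * x i) - (∑ i ∈ s, a i * x i) ^ 2) =
      ∑ i ∈ s, ∑ j ∈ s, (a i - a j) ^ 2 * (x i * x j) := by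
  symm
  calc ∑ i ∈ s, ∑ j ∈ s, (a i - a j) ^ 2 * (x i * x j)
      = ∑ i ∈ s, ∑ j ∈ s, (a i ^ 2 * x i * x j + x i * (a j ^ 2 * x j)
          - 2 * (a i * x i * (a j * x j))) :=
        sum_congr rfl fun i _ => sum_congr rfl fun j _ => by ring
    _ = _ := by
        simp only [sum_add_distrib, sum_sub_distrib, ← mul_sum, ← sum_mul]
        ring

end Lagrange

section SqrtBounds

variable {a b E e₁ e₂ δ : ℝ}

theorem sqrt_div_add_le_of_mul_eq (ha : 0 < a) (hb : 0 < b) (he₁ : 0 ≤ e₁) (he₂ : 0 ≤ e₂)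
    (hE : a * b * E = δ ^ 2 + b * (a + b) * e₁ + a * (a + b) * e₂) :
    √E / (a + b) ≤ √e₁ / a + √e₂ / b + |δ| / (√(a * b) * (a + b)) := by
  set u := √e₁ / a
  set v := √e₂ / b
  set d := |δ| / (√(a * b) * (a + b))
  have hab : 0 < a * b := mul_pos ha hb
  have hd : a * b * ((a + b) * d) ^ 2 = δ ^ 2 := by
    simp only [d]
    field_simp
    rw [sq_sqrt hab.le, sq_abs]
  have hu : b * (a + b) * e₁ ≤ a * b * ((a + b) * u) ^ 2 := by
    simp only [u]
    field_simp
    rw [sq_sqrt he₁]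
    nlinarith [mul_nonneg (mul_nonneg hb.le hb.le) he₁]
  have hv : a * (a + b) * e₂ ≤ a * b * ((a + b) * v) ^ 2 := by
    simp only [v]
    field_simp
    rw [sq_sqrt he₂]
    nlinarith [mul_nonneg (mul_nonneg ha.le ha.le) he₂]
  have hsq : ((a + b) * u) ^ 2 + ((a + b) * v) ^ 2 + ((a + b) * d) ^ 2
      ≤ ((u + v + d) * (a + b)) ^ 2 := by
    have hu₀ : 0 ≤ u := by positivity
    have hv₀ : 0 ≤ v := by positivity
    have hd₀ : 0 ≤ d := by positivity
    nlinarith [mul_nonneg (mul_nonneg hu₀ hv₀) (sq_nonneg (a + b)),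
      mul_nonneg (mul_nonneg hu₀ hd₀) (sq_nonneg (a + b)),
      mul_nonneg (mul_nonneg hv₀ hd₀) (sq_nonneg (a + b))]
  have hsum : a * b * E ≤ a * b * ((u + v + d) * (a + b)) ^ 2 :=
    calc a * b * E ≤ a * b * (((a + b) * u) ^ 2 + ((a + b) * v) ^ 2 + ((a + b) * d) ^ 2) := by
          rw [hE, mul_add, mul_add]
          linarith
      _ ≤ _ := by gcongr
  rw [div_le_iff₀ (by positivity), sqrt_le_left (by positivity)]
  exact le_of_mul_le_mul_left hsum hab

theorem abs_div_le_sqrt_div_of_mul_eq (ha : 0 < a) (hb : 0 < b) (he₁ : 0 ≤ e₁) (he₂ : 0 ≤ e₂)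
    (hE : a * b * E = δ ^ 2 + b * (a + b) * e₁ + a * (a + b) * e₂) :
    |δ| / (√(a * b) * (a + b)) ≤ √E / (a + b) := by
  have hδ₂ : δ ^ 2 ≤ a * b * E := by
    rw [hE]
    have : 0 ≤ b * (a + b) * e₁ := by positivity
    have : 0 ≤ a * (a + b) * e₂ := by positivity
    linarith
  have hδ : |δ| ≤ √(a * b) * √E := by
    rw [← sqrt_mul (by positivity)]
    exact abs_le_sqrt hδ₂
  rw [← div_div]
  gcongr
  rwa [div_le_iff₀' (sqrt_pos.2 (mul_pos ha hb))]

end SqrtBounds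

theorem intervalIntegrable_of_abs_le {f : ℝ → ℝ} {a b C : ℝ} (hf : AEStronglyMeasurable f)
    (hC : ∀ t ∈ Set.uIoc a b, |f t| ≤ C) : IntervalIntegrable f volume a b :=
  (intervalIntegrable_const (c := C)).mono_fun hf.restrict <|
    (ae_restrict_iff' measurableSet_uIoc).2 <| ae_of_all _ fun t ht =>
      (hC t ht).trans (le_abs_self C)

theorem gS_union {S₁ S₂ : Finset ℕ} (h : Disjoint S₁ S₂) (t : ℝ) :
    gS (S₁ ∪ S₂) t = gS S₁ t + gS S₂ t := sum_union h

theorem hS_union {S₁ S₂ : Finset ℕ} (h : Disjoint S₁ S₂) (t : ℝ) :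
    hS (S₁ ∪ S₂) t = hS S₁ t + hS S₂ t := sum_union h

theorem qS_union {S₁ S₂ : Finset ℕ} (h : Disjoint S₁ S₂) (t : ℝ) :
    qS (S₁ ∪ S₂) t = qS S₁ t + qS S₂ t := sum_union h

theorem gS_pos {S : Finset ℕ} (hS : S.Nonempty) {t : ℝ} (ht : 0 < t) : 0 < gS S t :=
  sum_pos (fun _ _ => pow_pos ht _) hS

@[fun_prop]
theorem continuous_gS (S : Finset ℕ) : Continuous (gS S) := by
  unfold gS; fun_prop

@[fun_prop]
theorem continuous_qS (S : Finset ℕ) : Continuous (qS S) := by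
  unfold qS; fun_prop

@[fun_prop]
theorem continuous_ES (S : Finset ℕ) : Continuous (ES S) := by
  unfold ES hS; fun_prop

theorem hasDerivAt_gS (S : Finset ℕ) (t : ℝ) : HasDerivAt (gS S) (2 * qS S t) t := by
  refine (HasDerivAt.fun_sum fun e (_ : e ∈ S) => hasDerivAt_pow (2 * e) t).congr_deriv ?_
  rw [qS, mul_sum]
  refine sum_congr rfl fun e _ => ?_
  push_cast
  ring

theorem deriv_gS (S : Finset ℕ) (t : ℝ) : deriv (gS S) t = 2 * qS S t :=
  (hasDerivAt_gS S t).deriv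

theorem sq_mul_ES (S : Finset ℕ) (t : ℝ) :
    t ^ 2 * ES S t = (∑ e ∈ S, t ^ (2 * e)) * (∑ e ∈ S, (e : ℝ) ^ 2 * t ^ (2 * e))
      - (∑ e ∈ S, (e : ℝ) * t ^ (2 * e)) ^ 2 := by
  have hh : t ^ 2 * hS S t = ∑ e ∈ S, (e : ℝ) ^ 2 * t ^ (2 * e) := by
    rw [hS, mul_sum]
    refine sum_congr rfl fun e _ => ?_
    rcases e with _ | n
    · simp
    · rw [show 2 * (n + 1) - 2 = 2 * n by omega]
      ring
  have hq : t * qS S t = ∑ e ∈ S, (e : ℝ) * t ^ (2 * e) := by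
    rw [qS, mul_sum]
    refine sum_congr rfl fun e _ => ?_
    rcases e with _ | n
    · simp
    · rw [show 2 * (n + 1) - 1 = 2 * n + 1 by omega]
      ring
  rw [← hh, ← hq, ES, gS]
  ring

theorem two_mul_sq_mul_ES (S : Finset ℕ) (t : ℝ) :
    2 * (t ^ 2 * ES S t) = ∑ e ∈ S, ∑ f ∈ S, ((e : ℝ) - f) ^ 2 * (t ^ (2 * e) * t ^ (2 * f)) := by
  rw [sq_mul_ES, two_mul_sum_mul_sum_sub_sq_sum S (fun e => (e : ℝ)) (fun e => t ^ (2 * e))]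

theorem ES_nonneg (S : Finset ℕ) {t : ℝ} (ht : 0 < t) : 0 ≤ ES S t := by
  have h : 0 ≤ 2 * t ^ 2 * ES S t := by rw [mul_assoc, two_mul_sq_mul_ES]; positivity
  exact nonneg_of_mul_nonneg_right h (by positivity)

theorem two_mul_ES_le (S : Finset ℕ) (hS : S.Nonempty) {t : ℝ} (ht : 0 < t) (ht1 : t ≤ 1) :
    2 * ES S t ≤ (∑ e ∈ S, ∑ f ∈ S, ((e : ℝ) - f) ^ 2) * t ^ (4 * S.min' hS) := by
  have hmul : 2 * (t ^ 2 * ES S t) ≤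
      (∑ e ∈ S, ∑ f ∈ S, ((e : ℝ) - f) ^ 2) * t ^ (4 * S.min' hS + 2) := by
    rw [two_mul_sq_mul_ES, sum_mul]
    refine sum_le_sum fun e he => ?_
    rw [sum_mul]
    refine sum_le_sum fun f hf => ?_
    obtain rfl | hef := eq_or_ne e f
    · simp
    · have := S.min'_le e he
      have := S.min'_le f hf
      rw [← pow_add]
      exact mul_le_mul_of_nonneg_left (pow_le_pow_of_le_one ht.le ht1 (by omega)) (sq_nonneg _)
  rw [pow_add] at hmul
  nlinarith [pow_pos ht 2]

theorem sqrt_ES_div_gS_le (S : Finset ℕ) (hS : S.Nonempty) {t : ℝ} (ht : 0 < t) (ht1 : t ≤ 1) :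
    √(ES S t) / gS S t ≤ √(∑ e ∈ S, ∑ f ∈ S, ((e : ℝ) - f) ^ 2) := by
  set K := ∑ e ∈ S, ∑ f ∈ S, ((e : ℝ) - f) ^ 2
  set m := S.min' hS
  have hg : t ^ (2 * m) ≤ gS S t :=
    single_le_sum (f := fun e => t ^ (2 * e)) (fun e _ => by positivity) (S.min'_mem hS)
  rw [div_le_iff₀ (gS_pos hS ht)]
  calc √(ES S t) ≤ √(K * t ^ (4 * m)) := by
        gcongr
        linarith [two_mul_ES_le S hS ht ht1, ES_nonneg S ht]
    _ = √K * t ^ (2 * m) := by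
        rw [sqrt_mul (by positivity), show 4 * m = 2 * m * 2 by ring, pow_mul, sqrt_sq (by positivity)]
    _ ≤ √K * gS S t := by gcongr

noncomputable def wronskianDensity (S₁ S₂ : Finset ℕ) (t : ℝ) : ℝ :=
  |gS S₂ t * deriv (gS S₁) t - gS S₁ t * deriv (gS S₂) t| /
    (√(gS S₁ t * gS S₂ t) * (gS S₁ t + gS S₂ t))

theorem wronskianDensity_eq (S₁ S₂ : Finset ℕ) (t : ℝ) :
    wronskianDensity S₁ S₂ t = 2 * (|qS S₁ t * gS S₂ t - qS S₂ t * gS S₁ t| /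
      (√(gS S₁ t * gS S₂ t) * (gS S₁ t + gS S₂ t))) := by
  rw [wronskianDensity, deriv_gS, deriv_gS, mul_div_assoc', ← abs_two, ← abs_mul]
  ring_nf

theorem gS_mul_gS_mul_ES_union {S₁ S₂ : Finset ℕ} (h : Disjoint S₁ S₂) (t : ℝ) :
    gS S₁ t * gS S₂ t * ES (S₁ ∪ S₂) t =
      (qS S₁ t * gS S₂ t - qS S₂ t * gS S₁ t) ^ 2 + gS S₂ t * (gS S₁ t + gS S₂ t) * ES S₁ t
        + gS S₁ t * (gS S₁ t + gS S₂ t) * ES S₂ t := by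
  simp only [ES, gS_union h, hS_union h, qS_union h]
  ring

section Union

variable {S₁ S₂ : Finset ℕ} (h₁ : S₁.Nonempty) (h₂ : S₂.Nonempty) (hdisj : Disjoint S₁ S₂)
  {t : ℝ} (ht : 0 < t)
include h₁ h₂ hdisj ht

theorem sqrt_ES_union_div_gS_le :
    √(ES (S₁ ∪ S₂) t) / gS (S₁ ∪ S₂) t ≤
      √(ES S₁ t) / gS S₁ t + √(ES S₂ t) / gS S₂ t + wronskianDensity S₁ S₂ t / 2 := by
  rw [wronskianDensity_eq, mul_div_cancel_left₀ _ two_ne_zero, gS_union hdisj]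
  exact sqrt_div_add_le_of_mul_eq (gS_pos h₁ ht) (gS_pos h₂ ht) (ES_nonneg S₁ ht)
    (ES_nonneg S₂ ht) (gS_mul_gS_mul_ES_union hdisj t)

theorem wronskianDensity_le :
    wronskianDensity S₁ S₂ t ≤ 2 * (√(ES (S₁ ∪ S₂) t) / gS (S₁ ∪ S₂) t) := by
  rw [wronskianDensity_eq, gS_union hdisj]
  gcongr 2 * ?_
  exact abs_div_le_sqrt_div_of_mul_eq (gS_pos h₁ ht) (gS_pos h₂ ht) (ES_nonneg S₁ ht)
    (ES_nonneg S₂ ht) (gS_mul_gS_mul_ES_union hdisj t)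

end Union

theorem intervalIntegrable_sqrt_ES_div_gS {S : Finset ℕ} (hS : S.Nonempty) :
    IntervalIntegrable (fun t => √(ES S t) / gS S t) volume 0 1 := by
  have hmeas : Measurable fun t => √(ES S t) / gS S t := by fun_prop
  refine intervalIntegrable_of_abs_le (C := √(∑ e ∈ S, ∑ f ∈ S, ((e : ℝ) - f) ^ 2))
    hmeas.aestronglyMeasurable fun t ht => ?_
  rw [Set.uIoc_of_le zero_le_one] at ht
  rw [abs_of_nonneg (div_nonneg (sqrt_nonneg _) (gS_pos hS ht.1).le)]
  exact sqrt_ES_div_gS_le S hS ht.1 ht.2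

theorem intervalIntegrable_wronskianDensity {S₁ S₂ : Finset ℕ} (h₁ : S₁.Nonempty)
    (h₂ : S₂.Nonempty) (hdisj : Disjoint S₁ S₂) :
    IntervalIntegrable (wronskianDensity S₁ S₂) volume 0 1 := by
  have hmeas : Measurable (wronskianDensity S₁ S₂) := by
    simp only [funext (wronskianDensity_eq S₁ S₂)]
    fun_prop
  refine intervalIntegrable_of_abs_le
    (C := 2 * √(∑ e ∈ S₁ ∪ S₂, ∑ f ∈ S₁ ∪ S₂, ((e : ℝ) - f) ^ 2))
    hmeas.aestronglyMeasurable fun t ht => ?_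
  rw [Set.uIoc_of_le zero_le_one] at ht
  have := gS_pos h₁ ht.1
  have := gS_pos h₂ ht.1
  rw [abs_of_nonneg (by rw [wronskianDensity]; positivity)]
  exact (wronskianDensity_le h₁ h₂ hdisj ht.1).trans <| mul_le_mul_of_nonneg_left
    (sqrt_ES_div_gS_le _ (h₁.mono subset_union_left) ht.1 ht.2) two_pos.le

theorem stmt18 (S₁ S₂ : Finset ℕ) (h₁ : S₁.Nonempty) (h₂ : S₂.Nonempty)
    (hdisj : Disjoint S₁ S₂) :
    zS (S₁ ∪ S₂) ≤ zS S₁ + zS S₂ +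
      (1 / (2 * Real.pi)) *
        ∫ t in (0 : ℝ)..1,
          |gS S₂ t * deriv (gS S₁) t - gS S₁ t * deriv (gS S₂) t| /
            (Real.sqrt (gS S₁ t * gS S₂ t) * (gS S₁ t + gS S₂ t)) := by
  have hF₁ := intervalIntegrable_sqrt_ES_div_gS h₁
  have hF₂ := intervalIntegrable_sqrt_ES_div_gS h₂
  have hW := intervalIntegrable_wronskianDensity h₁ h₂ hdisj
  have hmono : ∫ t in (0 : ℝ)..1, √(ES (S₁ ∪ S₂) t) / gS (S₁ ∪ S₂) t ≤
      (∫ t in (0 : ℝ)..1, √(ES S₁ t) / gS S₁ t) + (∫ t in (0 : ℝ)..1, √(ES S₂ t) / gS S₂ t)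
        + (∫ t in (0 : ℝ)..1, wronskianDensity S₁ S₂ t) / 2 := by
    rw [← intervalIntegral.integral_div, ← intervalIntegral.integral_add hF₁ hF₂,
      ← intervalIntegral.integral_add (hF₁.add hF₂) (hW.div_const 2)]
    exact intervalIntegral.integral_mono_on_of_le_Ioo zero_le_one
      (intervalIntegrable_sqrt_ES_div_gS (h₁.mono subset_union_left))
      ((hF₁.add hF₂).add (hW.div_const 2))
      fun t ht => sqrt_ES_union_div_gS_le h₁ h₂ hdisj ht.1
  change _ ≤ _ + _ + 1 / (2 * π) * ∫ t in (0 : ℝ)..1, wronskianDensity S₁ S₂ t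
  simp only [zS]
  have hπ := pi_pos
  calc 1 / π * ∫ t in (0 : ℝ)..1, √(ES (S₁ ∪ S₂) t) / gS (S₁ ∪ S₂) t
      ≤ 1 / π * ((∫ t in (0 : ℝ)..1, √(ES S₁ t) / gS S₁ t)
          + (∫ t in (0 : ℝ)..1, √(ES S₂ t) / gS S₂ t)
          + (∫ t in (0 : ℝ)..1, wronskianDensity S₁ S₂ t) / 2) :=
        mul_le_mul_of_nonneg_left hmono (by positivity)
    _ = _ := by field_simp
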